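/- Let R be a G-graded ring. Every graded ideal of R is graded strongly weakly 2-absorbing if and only if for all graded ideals I, J, K of R, IJ = IJK or IK = IJK or JK = IJK or IJK = 0. -/

import Mathlib

variable {G R : Type*} [AddGroup G] [DecidableEq G] [Ring R]

/-- A two-sided ideal is graded if it contains all homogeneous components of its elements. -/
def IsGradedIdeal (𝒜 : G → AddSubgroup R) [GradedRing 𝒜] (P : TwoSidedIdeal R) : Prop :=
  ∀ a ∈ P, ∀ g : G, (DirectSum.decompose 𝒜 a g : R) ∈ P

/-- Graded strongly weakly 2-absorbing: a proper graded ideal `P` such that for graded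
ideals `A, B, C` with `0 ≠ ABC ⊆ P`, we have `AB ⊆ P` or `AC ⊆ P` or `BC ⊆ P`. -/
def IsGradedStronglyWeakly2Absorbing (𝒜 : G → AddSubgroup R) [GradedRing 𝒜]
    (P : TwoSidedIdeal R) : Prop :=
  P ≠ ⊤ ∧ IsGradedIdeal 𝒜 P ∧
    ∀ A B C : TwoSidedIdeal R, IsGradedIdeal 𝒜 A → IsGradedIdeal 𝒜 B → IsGradedIdeal 𝒜 C →
      (∃ a ∈ A, ∃ b ∈ B, ∃ c ∈ C, a * b * c ≠ 0) →
      (∀ a ∈ A, ∀ b ∈ B, ∀ c ∈ C, a * b * c ∈ P) →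
      (∀ a ∈ A, ∀ b ∈ B, a * b ∈ P) ∨ (∀ a ∈ A, ∀ c ∈ C, a * c ∈ P) ∨
        (∀ b ∈ B, ∀ c ∈ C, b * c ∈ P)

/-- The product of two two-sided ideals: the two-sided ideal generated by products `a * b`
with `a ∈ I`, `b ∈ J`. -/
def tsiMul (I J : TwoSidedIdeal R) : TwoSidedIdeal R :=
  TwoSidedIdeal.span {x : R | ∃ a ∈ I, ∃ b ∈ J, x = a * b}

/-! For graded `I, J, K` the product `IJK` is again a graded ideal, since each homogeneous
component of `ab` is a sum of products of components of `a` and `b`. If `IJK` is neither `0`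
nor `R`, testing the absorbing property of `P = IJK` on `A, B, C = I, J, K` gives `IJ`, `IK`
or `JK` inside `IJK`, and the reverse inclusions always hold. Conversely, if `0 ≠ ABC ⊆ P` and `ABC`
equals one of `AB`, `AC`, `BC`, that product lies in `P`. -/

open DirectSum TwoSidedIdeal

section tsiMul

variable {I I' J K P : TwoSidedIdeal R}

theorem mul_mem_tsiMul {a b : R} (ha : a ∈ I) (hb : b ∈ J) : a * b ∈ tsiMul I J :=
  subset_span ⟨a, ha, b, hb, rfl⟩

theorem tsiMul_le_iff : tsiMul I J ≤ P ↔ ∀ a ∈ I, ∀ b ∈ J, a * b ∈ P := by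
  refine ⟨fun h a ha b hb => h (mul_mem_tsiMul ha hb), fun h => span_le.2 ?_⟩
  rintro _ ⟨a, ha, b, hb, rfl⟩
  exact h a ha b hb

theorem tsiMul_le_left : tsiMul I J ≤ I :=
  tsiMul_le_iff.2 fun a ha b _ => I.mul_mem_right a b ha

theorem tsiMul_le_right : tsiMul I J ≤ J :=
  tsiMul_le_iff.2 fun a _ b hb => J.mul_mem_left a b hb

theorem tsiMul_mono_left (h : I ≤ I') : tsiMul I J ≤ tsiMul I' J :=
  tsiMul_le_iff.2 fun _ ha _ hb => mul_mem_tsiMul (h ha) hb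

theorem tsiMul_tsiMul_le_iff :
    tsiMul (tsiMul I J) K ≤ P ↔ ∀ a ∈ I, ∀ b ∈ J, ∀ c ∈ K, a * b * c ∈ P := by
  refine ⟨fun h a ha b hb c hc => h (mul_mem_tsiMul (mul_mem_tsiMul ha hb) hc), fun h => ?_⟩
  refine tsiMul_le_iff.2 fun d hd => ?_
  induction hd using span_induction with
  | mem _ hx =>
    obtain ⟨a, ha, b, hb, rfl⟩ := hx
    exact h a ha b hb
  | zero => simp [P.zero_mem]
  | add x y _ _ hx hy => exact fun c hc => add_mul x y c ▸ P.add_mem (hx c hc) (hy c hc)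
  | neg x _ hx => exact fun c hc => neg_mul x c ▸ P.neg_mem (hx c hc)
  | left_absorb r x _ hx =>
    exact fun c hc => (mul_assoc r x c).symm ▸ P.mul_mem_left r _ (hx c hc)
  | right_absorb r x _ hx =>
    exact fun c hc => (mul_assoc x r c).symm ▸ hx _ (K.mul_mem_left r c hc)

theorem tsiMul_tsiMul_ne_bot_iff :
    tsiMul (tsiMul I J) K ≠ ⊥ ↔ ∃ a ∈ I, ∃ b ∈ J, ∃ c ∈ K, a * b * c ≠ 0 := by
  simp only [ne_eq, ← le_bot_iff, tsiMul_tsiMul_le_iff, mem_bot]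
  push Not
  rfl

end tsiMul

theorem coe_decompose_mul_mem {G R : Type*} [AddMonoid G] [DecidableEq G] [Ring R]
    {𝒜 : G → AddSubgroup R} [GradedRing 𝒜] {P : TwoSidedIdeal R} {x y : R}
    (h : ∀ i j, (decompose 𝒜 x i : R) * (decompose 𝒜 y j : R) ∈ P) (g : G) :
    (decompose 𝒜 (x * y) g : R) ∈ P := by
  classical
  rw [decompose_mul, coe_mul_apply]
  exact sum_mem fun ij _ => h ij.1 ij.2

section Graded

variable {𝒜 : G → AddSubgroup R} [GradedRing 𝒜]

theorem isGradedIdeal_span {s : Set R} (hs : ∀ x ∈ s, ∀ g, (decompose 𝒜 x g : R) ∈ span s) :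
    IsGradedIdeal 𝒜 (span s) := by
  intro x hx
  induction hx using span_induction with
  | mem x hx => exact hs x hx
  | zero => simpa only [← GradedRing.proj_apply, map_zero] using fun _ => (span s).zero_mem
  | add x y _ _ hx hy =>
    simpa only [← GradedRing.proj_apply, map_add] using fun g => add_mem (hx g) (hy g)
  | neg x _ hx => simpa only [← GradedRing.proj_apply, map_neg] using fun g => neg_mem (hx g)
  | left_absorb r x _ hx => exact coe_decompose_mul_mem fun i j => mul_mem_left _ _ _ (hx j)
  | right_absorb r x _ hx => exact coe_decompose_mul_mem fun i j => mul_mem_right _ _ _ (hx i)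

theorem IsGradedIdeal.tsiMul {I J : TwoSidedIdeal R} (hI : IsGradedIdeal 𝒜 I)
    (hJ : IsGradedIdeal 𝒜 J) : IsGradedIdeal 𝒜 (tsiMul I J) := by
  refine isGradedIdeal_span ?_
  rintro _ ⟨a, ha, b, hb, rfl⟩
  exact coe_decompose_mul_mem fun i j => mul_mem_tsiMul (hI a ha i) (hJ b hb j)

theorem isGradedStronglyWeakly2Absorbing_iff {P : TwoSidedIdeal R} :
    IsGradedStronglyWeakly2Absorbing 𝒜 P ↔ P ≠ ⊤ ∧ IsGradedIdeal 𝒜 P ∧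
      ∀ A B C : TwoSidedIdeal R, IsGradedIdeal 𝒜 A → IsGradedIdeal 𝒜 B → IsGradedIdeal 𝒜 C →
        tsiMul (tsiMul A B) C ≠ ⊥ → tsiMul (tsiMul A B) C ≤ P →
          tsiMul A B ≤ P ∨ tsiMul A C ≤ P ∨ tsiMul B C ≤ P := by
  simp_rw [IsGradedStronglyWeakly2Absorbing, tsiMul_tsiMul_ne_bot_iff, tsiMul_tsiMul_le_iff,
    tsiMul_le_iff]

end Graded

/-- Proposition 6.10: every graded ideal of `R` is graded strongly weakly 2-absorbing if and
only if for all graded ideals `I, J, K` we have `IJ = IJK` or `IK = IJK` or `JK = IJK` or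
`IJK = 0`. -/
theorem stmt19 (𝒜 : G → AddSubgroup R) [GradedRing 𝒜] :
    (∀ P : TwoSidedIdeal R, P ≠ ⊤ → IsGradedIdeal 𝒜 P →
        IsGradedStronglyWeakly2Absorbing 𝒜 P) ↔
      ∀ I J K : TwoSidedIdeal R, IsGradedIdeal 𝒜 I → IsGradedIdeal 𝒜 J → IsGradedIdeal 𝒜 K →
        tsiMul I J = tsiMul (tsiMul I J) K ∨ tsiMul I K = tsiMul (tsiMul I J) K ∨
          tsiMul J K = tsiMul (tsiMul I J) K ∨ tsiMul (tsiMul I J) K = ⊥ := by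
  constructor
  · intro H I J K hI hJ hK
    by_cases hbot : tsiMul (tsiMul I J) K = ⊥
    · exact Or.inr (Or.inr (Or.inr hbot))
    by_cases htop : tsiMul (tsiMul I J) K = ⊤
    · exact Or.inl (le_antisymm (htop ▸ le_top) tsiMul_le_left)
    obtain ⟨-, -, habs⟩ := isGradedStronglyWeakly2Absorbing_iff.1
      (H _ htop ((hI.tsiMul hJ).tsiMul hK))
    rcases habs I J K hI hJ hK hbot le_rfl with h | h | h
    · exact Or.inl (le_antisymm h tsiMul_le_left)
    · exact Or.inr (Or.inl (le_antisymm h (tsiMul_mono_left tsiMul_le_left)))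
    · exact Or.inr (Or.inr (Or.inl (le_antisymm h (tsiMul_mono_left tsiMul_le_right))))
  · intro H P hP hPg
    refine isGradedStronglyWeakly2Absorbing_iff.2 ⟨hP, hPg, fun A B C hA hB hC hne hle => ?_⟩
    rcases H A B C hA hB hC with h | h | h | h
    · exact Or.inl (h ▸ hle)
    · exact Or.inr (Or.inl (h ▸ hle))
    · exact Or.inr (Or.inr (h ▸ hle))
    · exact absurd h hne
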